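/- The naturally graded p-filiform Leibniz algebra μ₃ with basis {e₁,…,e_{n-2k-1}, f₁,…,f_{2k+1}} and products [eᵢ,e₁] = e_{i+1} (1 ≤ i ≤ n-2k-2), [e₁,f_j] = f_{k+1+j} (1 ≤ j ≤ k), [eᵢ,f_{k+1}] = e_{i+1} (1 ≤ i ≤ n-2k-2), is isomorphic (as a Leibniz algebra) to the algebra with basis {e₁',…,e_{n-2k}', f₁',…,f_{2k}'} and products [eᵢ',e₁'] = e_{i+1}' (2 ≤ i ≤ n-2k-1), [e₂',f_j'] = f_{k+j}' (1 ≤ j ≤ k), via the change of basis e₁' = f_{k+1}, e₂' = e₁ - f_{k+1}, e_{i+1}' = eᵢ (2 ≤ i ≤ n-2k-1), f_j' = f_j, f_{k+j}' = f_{k+1+j} (1 ≤ j ≤ k). -/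

import Mathlib

noncomputable section

open Finset

/-! The naturally graded p-filiform Leibniz algebra `μ₃` (basis
`e₁,…,e_{n-2k-1}, f₁,…,f_{2k+1}`) and the algebra `μ₃'` (basis
`e₁',…,e_{n-2k}', f₁',…,f_{2k}'`), together with the change of basis giving an
isomorphism between them. -/

/-- Underlying space of `μ₃`. -/
abbrev L3 (n k : ℕ) := (Fin (n - 2 * k - 1) ⊕ Fin (2 * k + 1)) → ℂ

/-- Underlying space of `μ₃'`. -/
abbrev L3' (n k : ℕ) := (Fin (n - 2 * k) ⊕ Fin (2 * k)) → ℂ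

/-- basis `eᵢ` of `μ₃` (1-indexed, zero out of range). -/
def E3 (n k : ℕ) (i : ℕ) : L3 n k := fun s =>
  match s with
  | .inl a => if (a : ℕ) + 1 = i then 1 else 0
  | .inr _ => 0

/-- basis `fⱼ` of `μ₃` (1-indexed, zero out of range). -/
def F3 (n k : ℕ) (j : ℕ) : L3 n k := fun s =>
  match s with
  | .inl _ => 0
  | .inr a => if (a : ℕ) + 1 = j then 1 else 0

/-- basis `eᵢ'` of `μ₃'`. -/
def E3' (n k : ℕ) (i : ℕ) : L3' n k := fun s =>
  match s with
  | .inl a => if (a : ℕ) + 1 = i then 1 else 0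
  | .inr _ => 0

/-- basis `fⱼ'` of `μ₃'`. -/
def F3' (n k : ℕ) (j : ℕ) : L3' n k := fun s =>
  match s with
  | .inl _ => 0
  | .inr a => if (a : ℕ) + 1 = j then 1 else 0

/-- Structure constants of `μ₃`: `[eᵢ,e₁] = e_{i+1}` (1 ≤ i ≤ n-2k-2),
`[e₁,fⱼ] = f_{k+1+j}` (1 ≤ j ≤ k), `[eᵢ,f_{k+1}] = e_{i+1}` (1 ≤ i ≤ n-2k-2). -/
def c3 (n k : ℕ) :
    (Fin (n - 2 * k - 1) ⊕ Fin (2 * k + 1)) → (Fin (n - 2 * k - 1) ⊕ Fin (2 * k + 1)) → L3 n k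
  | .inl a, .inl b => if (b : ℕ) = 0 then E3 n k ((a : ℕ) + 2) else 0
  | .inl a, .inr b =>
      (if (a : ℕ) = 0 ∧ (b : ℕ) < k then F3 n k ((b : ℕ) + 1 + (k + 1)) else 0)
      + (if (b : ℕ) = k then E3 n k ((a : ℕ) + 2) else 0)
  | _, _ => 0

/-- Structure constants of `μ₃'`: `[eᵢ',e₁'] = e_{i+1}'` (2 ≤ i ≤ n-2k-1),
`[e₂',fⱼ'] = f_{k+j}'` (1 ≤ j ≤ k). -/
def c3' (n k : ℕ) :
    (Fin (n - 2 * k) ⊕ Fin (2 * k)) → (Fin (n - 2 * k) ⊕ Fin (2 * k)) → L3' n k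
  | .inl a, .inl b => if (b : ℕ) = 0 ∧ 1 ≤ (a : ℕ) then E3' n k ((a : ℕ) + 2) else 0
  | .inl a, .inr b => if (a : ℕ) = 1 ∧ (b : ℕ) < k then F3' n k ((b : ℕ) + 1 + k) else 0
  | _, _ => 0

/-- Bracket of `μ₃`. -/
def brk3 (n k : ℕ) (x y : L3 n k) : L3 n k :=
  ∑ i, ∑ j, (x i * y j) • c3 n k i j

/-- Bracket of `μ₃'`. -/
def brk3' (n k : ℕ) (x y : L3' n k) : L3' n k :=
  ∑ i, ∑ j, (x i * y j) • c3' n k i j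

/-- The change of basis on basis vectors of `μ₃'`:
`e₁' ↦ f_{k+1}`, `e₂' ↦ e₁ - f_{k+1}`, `e_{i+1}' ↦ eᵢ` (2 ≤ i ≤ n-2k-1),
`fⱼ' ↦ fⱼ`, `f_{k+j}' ↦ f_{k+1+j}` (1 ≤ j ≤ k). -/
def img (n k : ℕ) : (Fin (n - 2 * k) ⊕ Fin (2 * k)) → L3 n k
  | .inl a =>
      if (a : ℕ) = 0 then F3 n k (k + 1)
      else if (a : ℕ) = 1 then E3 n k 1 - F3 n k (k + 1)
      else E3 n k (a : ℕ)
  | .inr b => if (b : ℕ) < k then F3 n k ((b : ℕ) + 1) else F3 n k ((b : ℕ) + 2)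

/-- The linear extension of the change of basis. -/
def ψiso (n k : ℕ) (x : L3' n k) : L3 n k := ∑ i, x i • img n k i


/-! Everything is compared coordinate by coordinate. Each bracket has only a few nonzero
coordinate functions, e.g. `[x, y]_{e_{i+1}} = x_{e_i} (y_{e₁} + y_{f_{k+1}})` in `μ₃`, and `ψiso`
merely relabels coordinates except that `(ψ x)_{f_{k+1}} = x_{e₁'} - x_{e₂'}`. The point is that
`(ψ y)_{e₁} + (ψ y)_{f_{k+1}} = y_{e₁'}`: right multiplication by `e₁` and by `f_{k+1}`, which act
alike on the `eᵢ` of `μ₃`, add up to right multiplication by `e₁'`. The same coordinate formulas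
show that `ψiso` is injective, hence bijective, both spaces having dimension `n`. -/

theorem Fin.sum_ite_val_eq {M : Type*} [AddCommMonoid M] {N : ℕ} (m : ℕ) (f : Fin N → M) :
    (∑ a : Fin N, if (a : ℕ) = m then f a else 0) = if h : m < N then f ⟨m, h⟩ else 0 := by
  split_ifs with h
  · rw [← Fintype.sum_ite_eq' (⟨m, h⟩ : Fin N) f]
    simp only [Fin.ext_iff]
  · exact Finset.sum_eq_zero fun a _ => if_neg fun ha => h (by omega)

theorem Fin.sum_ite_eq_val {M : Type*} [AddCommMonoid M] {N : ℕ} (m : ℕ) (f : Fin N → M) :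
    (∑ a : Fin N, if m = (a : ℕ) then f a else 0) = if h : m < N then f ⟨m, h⟩ else 0 := by
  simp only [eq_comm (a := m), Fin.sum_ite_val_eq]

theorem Fin.sum_ite_ite_eq_val {M : Type*} [AddCommMonoid M] {N : ℕ} (m : ℕ) (p : Fin N → Prop)
    [DecidablePred p] (f : Fin N → M) :
    (∑ a : Fin N, if p a then if m = (a : ℕ) then f a else 0 else 0)
      = if h : m < N then if p ⟨m, h⟩ then f ⟨m, h⟩ else 0 else 0 := by
  simp_rw [← ite_and, and_comm (a := p _), ite_and, Fin.sum_ite_eq_val]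

section Bracket

variable {n k : ℕ} (x y : L3 n k)

lemma brk3_apply (s) : brk3 n k x y s = ∑ i, ∑ j, x i * y j * c3 n k i j s := by
  simp [brk3, Finset.sum_apply]

lemma brk3_apply_inl_zero (h : 0 < n - 2 * k - 1) : brk3 n k x y (.inl ⟨0, h⟩) = 0 := by
  simp [brk3_apply, Fintype.sum_sum_type, c3, E3, F3, ite_apply]

lemma brk3_apply_inl_succ (m : ℕ) (hm : m + 1 < n - 2 * k - 1) :
    brk3 n k x y (.inl ⟨m + 1, hm⟩)
      = x (.inl ⟨m, by omega⟩) * (y (.inl ⟨0, by omega⟩) + y (.inr ⟨k, by omega⟩)) := by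
  have h0 : 0 < n - 2 * k - 1 := by omega
  have hm' : m < n - 2 * k - 1 := by omega
  simp +arith [brk3_apply, Fintype.sum_sum_type, c3, E3, F3, ite_apply, ite_and, mul_ite,
    mul_add, Finset.sum_add_distrib, Fin.sum_ite_val_eq, Fin.sum_ite_eq_val, h0, hm']

lemma brk3_apply_inr_of_le (b : ℕ) (hb : b ≤ k) : brk3 n k x y (.inr ⟨b, by omega⟩) = 0 := by
  rw [brk3_apply]
  refine Finset.sum_eq_zero fun i _ => Finset.sum_eq_zero fun j _ => ?_
  rcases i with a | a <;> rcases j with c | c <;> simp [c3, E3, F3, ite_apply]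
  omega

lemma brk3_apply_inr_add (hn : 2 * k + 2 ≤ n) (j : ℕ) (hj : j < k) :
    brk3 n k x y (.inr ⟨k + 1 + j, by omega⟩) = x (.inl ⟨0, by omega⟩) * y (.inr ⟨j, by omega⟩) := by
  have h0 : 0 < n - 2 * k - 1 := by omega
  have hj' : j < 2 * k + 1 := by omega
  simp +arith [brk3_apply, Fintype.sum_sum_type, c3, E3, F3, ite_apply, ite_and, mul_ite,
    Finset.sum_add_distrib, Fin.sum_ite_val_eq, Fin.sum_ite_ite_eq_val, h0, hj, hj']

end Bracket

section Bracket'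

variable {n k : ℕ} (x y : L3' n k)

lemma brk3'_apply (s) : brk3' n k x y s = ∑ i, ∑ j, x i * y j * c3' n k i j s := by
  simp [brk3', Finset.sum_apply]

lemma brk3'_apply_inl_of_lt_two (m : ℕ) (hm : m < 2) (hm' : m < n - 2 * k) :
    brk3' n k x y (.inl ⟨m, hm'⟩) = 0 := by
  rw [brk3'_apply]
  refine Finset.sum_eq_zero fun i _ => Finset.sum_eq_zero fun j _ => ?_
  rcases i with a | a <;> rcases j with c | c <;> simp [c3', E3', F3', ite_apply]
  omega

lemma brk3'_apply_inl_add_two (m : ℕ) (hm : m + 2 < n - 2 * k) :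
    brk3' n k x y (.inl ⟨m + 2, hm⟩) = x (.inl ⟨m + 1, by omega⟩) * y (.inl ⟨0, by omega⟩) := by
  have h0 : 0 < n - 2 * k := by omega
  have hm' : m + 1 < n - 2 * k := by omega
  simp +arith [brk3'_apply, Fintype.sum_sum_type, c3', E3', F3', ite_apply, ite_and, mul_ite,
    Finset.sum_add_distrib, Fin.sum_ite_val_eq, Fin.sum_ite_ite_eq_val, h0, hm']

lemma brk3'_apply_inr_of_lt (b : ℕ) (hb : b < k) : brk3' n k x y (.inr ⟨b, by omega⟩) = 0 := by
  rw [brk3'_apply]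
  refine Finset.sum_eq_zero fun i _ => Finset.sum_eq_zero fun j _ => ?_
  rcases i with a | a <;> rcases j with c | c <;> simp [c3', E3', F3', ite_apply]
  omega

lemma brk3'_apply_inr_add (hn : 2 * k + 2 ≤ n) (j : ℕ) (hj : j < k) :
    brk3' n k x y (.inr ⟨k + j, by omega⟩) = x (.inl ⟨1, by omega⟩) * y (.inr ⟨j, by omega⟩) := by
  have h1 : 1 < n - 2 * k := by omega
  have hj' : j < 2 * k := by omega
  simp +arith [brk3'_apply, Fintype.sum_sum_type, c3', E3', F3', ite_apply, ite_and, mul_ite,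
    Finset.sum_add_distrib, Fin.sum_ite_val_eq, Fin.sum_ite_ite_eq_val, h1, hj, hj']

end Bracket'

section ChangeOfBasis

variable {n k : ℕ}

lemma img_apply_inl (i) (m : ℕ) (hm : m < n - 2 * k - 1) :
    img n k i (.inl ⟨m, hm⟩) = if i = .inl ⟨m + 1, by omega⟩ then 1 else 0 := by
  rcases i with ⟨a, ha⟩ | ⟨c, hc⟩ <;> simp [img, E3, F3, ite_apply]
  split_ifs <;> first | rfl | (exfalso; omega)

lemma img_apply_inr_of_lt (i) (b : ℕ) (hb : b < k) :
    img n k i (.inr ⟨b, by omega⟩) = if i = .inr ⟨b, by omega⟩ then 1 else 0 := by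
  rcases i with ⟨a, ha⟩ | ⟨c, hc⟩ <;> simp [img, E3, F3, ite_apply] <;> split_ifs <;>
    first | rfl | (exfalso; omega) | norm_num

lemma img_apply_inr_self (hn : 2 * k + 2 ≤ n) (i) :
    img n k i (.inr ⟨k, by omega⟩)
      = (if i = .inl ⟨0, by omega⟩ then 1 else 0) - (if i = .inl ⟨1, by omega⟩ then 1 else 0) := by
  rcases i with ⟨a, ha⟩ | ⟨c, hc⟩ <;> simp [img, E3, F3, ite_apply] <;> split_ifs <;>
    first | rfl | (exfalso; omega) | norm_num

lemma img_apply_inr_add (i) (j : ℕ) (hj : j < k) :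
    img n k i (.inr ⟨k + 1 + j, by omega⟩) = if i = .inr ⟨k + j, by omega⟩ then 1 else 0 := by
  rcases i with ⟨a, ha⟩ | ⟨c, hc⟩ <;> simp [img, E3, F3, ite_apply] <;> split_ifs <;>
    first | rfl | (exfalso; omega) | norm_num

variable (x : L3' n k)

lemma ψiso_apply (s) : ψiso n k x s = ∑ i, x i * img n k i s := by
  simp [ψiso, Finset.sum_apply]

lemma ψiso_apply_inl (m : ℕ) (hm : m < n - 2 * k - 1) :
    ψiso n k x (.inl ⟨m, hm⟩) = x (.inl ⟨m + 1, by omega⟩) := by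
  simp [ψiso_apply, img_apply_inl]

lemma ψiso_apply_inr_of_lt (b : ℕ) (hb : b < k) :
    ψiso n k x (.inr ⟨b, by omega⟩) = x (.inr ⟨b, by omega⟩) := by
  simp [ψiso_apply, img_apply_inr_of_lt _ _ hb]

lemma ψiso_apply_inr_self (hn : 2 * k + 2 ≤ n) :
    ψiso n k x (.inr ⟨k, by omega⟩) = x (.inl ⟨0, by omega⟩) - x (.inl ⟨1, by omega⟩) := by
  simp [ψiso_apply, img_apply_inr_self hn, mul_sub, Finset.sum_sub_distrib]

lemma ψiso_apply_inr_add (j : ℕ) (hj : j < k) :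
    ψiso n k x (.inr ⟨k + 1 + j, by omega⟩) = x (.inr ⟨k + j, by omega⟩) := by
  simp [ψiso_apply, img_apply_inr_add _ _ hj]

end ChangeOfBasis

lemma ψiso_injective {n k : ℕ} (hn : 2 * k + 2 ≤ n) : Function.Injective (ψiso n k) := by
  intro x y hxy
  have h := congrFun hxy
  funext s
  rcases s with ⟨_ | m, hm⟩ | ⟨b, hb⟩
  · have h0 := h (.inl ⟨0, by omega⟩)
    have hk := h (.inr ⟨k, by omega⟩)
    rw [ψiso_apply_inl, ψiso_apply_inl] at h0
    rw [ψiso_apply_inr_self _ hn, ψiso_apply_inr_self _ hn] at hk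
    linear_combination hk + h0
  · have hm' := h (.inl ⟨m, by omega⟩)
    rwa [ψiso_apply_inl, ψiso_apply_inl] at hm'
  · rcases Nat.lt_or_ge b k with hbk | hbk
    · have hb' := h (.inr ⟨b, by omega⟩)
      rwa [ψiso_apply_inr_of_lt _ _ hbk, ψiso_apply_inr_of_lt _ _ hbk] at hb'
    · obtain ⟨j, rfl⟩ : ∃ j, b = k + j := ⟨b - k, by omega⟩
      have hj : j < k := by omega
      have hb' := h (.inr ⟨k + 1 + j, by omega⟩)
      rwa [ψiso_apply_inr_add _ _ hj, ψiso_apply_inr_add _ _ hj] at hb'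

lemma ψiso_bijective {n k : ℕ} (hn : 2 * k + 2 ≤ n) : Function.Bijective (ψiso n k) := by
  have hdim : Module.finrank ℂ (L3' n k) = Module.finrank ℂ (L3 n k) := by
    simp only [Module.finrank_fintype_fun_eq_card, Fintype.card_sum, Fintype.card_fin]
    omega
  refine ⟨ψiso_injective hn, ?_⟩
  exact (LinearMap.injective_iff_surjective_of_finrank_eq_finrank hdim
    (f := Fintype.linearCombination ℂ (img n k))).mp (ψiso_injective hn)

lemma ψiso_brk3' {n k : ℕ} (hn : 2 * k + 2 ≤ n) (x y : L3' n k) :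
    ψiso n k (brk3' n k x y) = brk3 n k (ψiso n k x) (ψiso n k y) := by
  funext s
  rcases s with ⟨_ | m, hm⟩ | ⟨b, hb⟩
  · rw [ψiso_apply_inl, brk3'_apply_inl_of_lt_two _ _ 1 (by omega), brk3_apply_inl_zero]
  · rw [ψiso_apply_inl, brk3'_apply_inl_add_two, brk3_apply_inl_succ, ψiso_apply_inl,
      ψiso_apply_inl, ψiso_apply_inr_self _ hn]
    ring
  · rcases lt_trichotomy b k with hbk | rfl | hbk
    · rw [ψiso_apply_inr_of_lt _ _ hbk, brk3'_apply_inr_of_lt _ _ _ hbk,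
        brk3_apply_inr_of_le _ _ _ hbk.le]
    · rw [ψiso_apply_inr_self _ hn, brk3'_apply_inl_of_lt_two _ _ 0 (by omega),
        brk3'_apply_inl_of_lt_two _ _ 1 (by omega), brk3_apply_inr_of_le _ _ _ le_rfl, sub_zero]
    · obtain ⟨j, rfl⟩ : ∃ j, b = k + 1 + j := ⟨b - k - 1, by omega⟩
      have hj : j < k := by omega
      rw [ψiso_apply_inr_add _ _ hj, brk3'_apply_inr_add _ _ hn _ hj,
        brk3_apply_inr_add _ _ hn _ hj, ψiso_apply_inl, ψiso_apply_inr_of_lt _ _ hj]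

theorem mu3_iso_mu3prime_general (n k : ℕ) (hn : 2 * k + 5 ≤ n) :
    Function.Bijective (ψiso n k) ∧
    ∀ x y : L3' n k, ψiso n k (brk3' n k x y) = brk3 n k (ψiso n k x) (ψiso n k y) :=
  ⟨ψiso_bijective (by omega), ψiso_brk3' (by omega)⟩

/-- `μ₃` is isomorphic to `μ₃'` via the indicated change of basis: the linear
map extending it is bijective and transports the bracket of `μ₃'` to the
bracket of `μ₃`. -/
theorem mu3_iso_mu3prime (n k : ℕ) (hk : 1 ≤ k) (hn : 2 * k + 5 ≤ n) :
    Function.Bijective (ψiso n k) ∧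
    ∀ x y : L3' n k, ψiso n k (brk3' n k x y) = brk3 n k (ψiso n k x) (ψiso n k y) :=
  mu3_iso_mu3prime_general n k hn

end
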